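/- arXiv:1201.1953 — 2 statements merged into one kernel-verified Lean document; each statement's English description precedes it below -/
import Mathlib

section
/- Let G = ⟨(1,0),(0,1),(α,β)⟩ ⊂ ℝ² with {1,α,β} linearly independent over ℚ and 0 < α < 1 < β, with the strict ordering, and let τ be the second-coordinate projection. Then τ is group-like with respect to the order unit u = (1,1): for every a ∈ G with 0 ≤ τ(a) ≤ 1 there exists b ∈ G⁺ with b ≤ u and τ(b) = τ(a). However, τ is not group-like with respect to the order unit (α,β). -/
/-!
By linear independence, `α` and `β` are irrational. For `u = (1,1)`: an element of `G` with trace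
strictly between `0` and `1` has a nonzero `(α,β)`-coefficient, hence an irrational first
coordinate, and subtracting its floor times `(1,0)` lands strictly inside `[0,u]` without changing
the trace. For `u = (α,β)` take `a = (1,1)`, admissible as `1 ≤ β`: the only elements of trace `1`
are the `(m,1)` with `m ∈ ℤ`, and none of them lies in `[0,u]`: positivity forces `m ≥ 1 > α`,
and `α ∉ ℤ` excludes `(m,1) = u`.
-/

namespace Paper

/-- The positive cone of the strict ordering on a dense subgroup of `ℝ²`:
zero, or both coordinates strictly positive. -/
def StrictPos (p : ℝ × ℝ) : Prop := p = 0 ∨ (0 < p.1 ∧ 0 < p.2)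

/-- The subgroup of `ℝ²` generated by `(1,0)`, `(0,1)`, `(α,β)`. -/
def genGrp (α β : ℝ) : AddSubgroup (ℝ × ℝ) :=
  AddSubgroup.closure {((1 : ℝ), (0 : ℝ)), ((0 : ℝ), (1 : ℝ)), (α, β)}

/-- `τ([0,u]) = τ(G) ∩ [0, τ(u)]` for the trace `τ = Prod.snd`; the inclusion `⊆` is automatic,
so only `⊇` is recorded. -/
def SndIsGroupLike (G : AddSubgroup (ℝ × ℝ)) (u : ℝ × ℝ) : Prop :=
  ∀ a ∈ G, 0 ≤ a.2 → a.2 ≤ u.2 → ∃ b ∈ G, StrictPos b ∧ StrictPos (u - b) ∧ b.2 = a.2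

lemma irrational_of_linearIndependent {ι : Type*} {v : ι → ℝ} (hv : LinearIndependent ℚ v)
    {i j : ι} (hij : i ≠ j) (hi : v i = 1) : Irrational (v j) := by
  rintro ⟨q, hq⟩
  have h := (LinearIndepOn.pair_iff v hij).1 (hv.linearIndepOn _) q (-1)
    (by rw [hi, ← hq, Rat.smul_def, Rat.smul_def]; push_cast; ring)
  norm_num at h

lemma mem_genGrp_iff {α β : ℝ} {x : ℝ × ℝ} :
    x ∈ genGrp α β ↔ ∃ m n p : ℤ, x = (m + p * α, n + p * β) := by
  constructor
  · intro hx
    induction hx using AddSubgroup.closure_induction with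
    | mem y hy =>
      simp only [Set.mem_insert_iff, Set.mem_singleton_iff] at hy
      rcases hy with rfl | rfl | rfl
      exacts [⟨1, 0, 0, by simp⟩, ⟨0, 1, 0, by simp⟩, ⟨0, 0, 1, by simp⟩]
    | zero => exact ⟨0, 0, 0, by ext <;> simp⟩
    | add _ _ _ _ hx hy =>
      obtain ⟨m, n, p, rfl⟩ := hx
      obtain ⟨m', n', p', rfl⟩ := hy
      exact ⟨m + m', n + n', p + p', by ext <;> simp <;> ring⟩
    | neg _ _ hx =>
      obtain ⟨m, n, p, rfl⟩ := hx
      exact ⟨-m, -n, -p, by ext <;> simp <;> ring⟩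
  · rintro ⟨m, n, p, rfl⟩
    have hmem : ∀ y ∈ ({((1 : ℝ), (0 : ℝ)), ((0 : ℝ), (1 : ℝ)), (α, β)} : Set (ℝ × ℝ)),
        y ∈ genGrp α β := fun _ hy ↦ AddSubgroup.subset_closure hy
    have hsum : ((m : ℝ) + p * α, (n : ℝ) + p * β)
        = m • ((1 : ℝ), (0 : ℝ)) + n • ((0 : ℝ), (1 : ℝ)) + p • (α, β) := by
      ext <;> simp
    rw [hsum]
    exact add_mem (add_mem (zsmul_mem (hmem _ (by simp)) m) (zsmul_mem (hmem _ (by simp)) n))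
      (zsmul_mem (hmem _ (by simp)) p)

lemma mk_fract_fst_mem_genGrp {α β : ℝ} {a : ℝ × ℝ} (ha : a ∈ genGrp α β) :
    (Int.fract a.1, a.2) ∈ genGrp α β := by
  obtain ⟨m, n, p, rfl⟩ := mem_genGrp_iff.1 ha
  refine mem_genGrp_iff.2 ⟨m - ⌊(m : ℝ) + p * α⌋, n, p, ?_⟩
  ext
  · rw [Int.fract]; push_cast; ring
  · rfl

lemma irrational_fst_of_mem_genGrp {α β : ℝ} (hα : Irrational α) {a : ℝ × ℝ}
    (ha : a ∈ genGrp α β) (h2 : ∀ n : ℤ, a.2 ≠ n) : Irrational a.1 := by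
  obtain ⟨m, n, p, rfl⟩ := mem_genGrp_iff.1 ha
  have hp : p ≠ 0 := by
    rintro rfl
    exact h2 n (by simp)
  exact (hα.intCast_mul hp).intCast_add m

lemma snd_eq_of_mem_genGrp {α β : ℝ} (hβ : Irrational β) {b : ℝ × ℝ} (hb : b ∈ genGrp α β)
    {k : ℤ} (h2 : b.2 = k) : ∃ m : ℤ, b = ((m : ℝ), (k : ℝ)) := by
  obtain ⟨m, n, p, rfl⟩ := mem_genGrp_iff.1 hb
  obtain rfl : p = 0 := by
    by_contra hp
    exact (hβ.intCast_mul hp).intCast_add n |>.ne_int k h2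
  exact ⟨m, by simpa using h2⟩

theorem sndIsGroupLike_one_one {α β : ℝ} (hα : Irrational α) :
    SndIsGroupLike (genGrp α β) (1, 1) := by
  intro a ha h0 (h1 : a.2 ≤ 1)
  rcases h0.eq_or_lt with h0 | h0
  · exact ⟨0, zero_mem _, Or.inl rfl, Or.inr ⟨by simp, by simp⟩, h0⟩
  rcases h1.eq_or_lt with h1 | h1
  · exact ⟨(1, 1), mem_genGrp_iff.2 ⟨1, 1, 0, by simp⟩, Or.inr ⟨one_pos, one_pos⟩,
      Or.inl (sub_self _), h1.symm⟩
  have hnotint : ∀ n : ℤ, a.2 ≠ n := by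
    intro n hn
    rw [hn] at h0 h1
    have : (0 : ℤ) < n := by exact_mod_cast h0
    have : n < (1 : ℤ) := by exact_mod_cast h1
    omega
  have hfract : 0 < Int.fract a.1 :=
    Int.fract_pos.2 ((irrational_fst_of_mem_genGrp hα ha hnotint).ne_int _)
  refine ⟨(Int.fract a.1, a.2), mk_fract_fst_mem_genGrp ha, Or.inr ⟨hfract, h0⟩,
    Or.inr ⟨?_, ?_⟩, rfl⟩
  · simpa using Int.fract_lt_one a.1
  · simpa using h1

theorem not_sndIsGroupLike_self {α β : ℝ} (hα : Irrational α) (hβ : Irrational β)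
    (hα1 : α < 1) (hβ1 : 1 < β) : ¬ SndIsGroupLike (genGrp α β) (α, β) := by
  intro h
  obtain ⟨b, hb, hb0, hbu, hb2⟩ :=
    h (1, 1) (mem_genGrp_iff.2 ⟨1, 1, 0, by simp⟩) zero_le_one hβ1.le
  obtain ⟨m, rfl⟩ := snd_eq_of_mem_genGrp hβ hb (k := 1) (by simpa using hb2)
  have hm : 1 ≤ m := by
    rcases hb0 with h | h
    · simp [Prod.ext_iff] at h
    · exact Int.cast_pos.1 h.1
  rcases hbu with h | ⟨h, -⟩
  · simp only [Prod.ext_iff, sub_eq_zero] at h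
    exact hα.ne_int m h.1
  · have : (1 : ℝ) ≤ m := by exact_mod_cast hm
    simp only [Prod.fst_sub, sub_pos] at h
    linarith

theorem group_like_depends_on_order_unit_general (α β : ℝ)
    (hli : LinearIndependent ℚ ![(1 : ℝ), α, β])
    (hα1 : α < 1) (hβ : 1 < β) :
    (∀ a : ℝ × ℝ, a ∈ genGrp α β → 0 ≤ a.2 → a.2 ≤ 1 →
      ∃ b : ℝ × ℝ, b ∈ genGrp α β ∧ StrictPos b ∧
        StrictPos (((1 : ℝ), (1 : ℝ)) - b) ∧ b.2 = a.2) ∧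
    ¬ (∀ a : ℝ × ℝ, a ∈ genGrp α β → 0 ≤ a.2 → a.2 ≤ β →
      ∃ b : ℝ × ℝ, b ∈ genGrp α β ∧ StrictPos b ∧
        StrictPos ((α, β) - b) ∧ b.2 = a.2) := by
  have hα : Irrational α := irrational_of_linearIndependent hli (i := 0) (j := 1) (by decide) rfl
  have hβ' : Irrational β := irrational_of_linearIndependent hli (i := 0) (j := 2) (by decide) rfl
  exact ⟨sndIsGroupLike_one_one hα, not_sndIsGroupLike_self hα hβ' hα1 hβ⟩

theorem group_like_depends_on_order_unit (α β : ℝ)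
    (hli : LinearIndependent ℚ ![(1 : ℝ), α, β])
    (hα0 : 0 < α) (hα1 : α < 1) (hβ : 1 < β) :
    (∀ a : ℝ × ℝ, a ∈ genGrp α β → 0 ≤ a.2 → a.2 ≤ 1 →
      ∃ b : ℝ × ℝ, b ∈ genGrp α β ∧ StrictPos b ∧
        StrictPos (((1 : ℝ), (1 : ℝ)) - b) ∧ b.2 = a.2) ∧
    ¬ (∀ a : ℝ × ℝ, a ∈ genGrp α β → 0 ≤ a.2 → a.2 ≤ β →
      ∃ b : ℝ × ℝ, b ∈ genGrp α β ∧ StrictPos b ∧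
        StrictPos ((α, β) - b) ∧ b.2 = a.2) :=
  group_like_depends_on_order_unit_general α β hli hα1 hβ

end Paper
end

section
/- Let (G,u) be a simple dimension group and L a subgroup of G with L ∩ G⁺ = {0} such that G/L is torsion-free. Suppose that for all k ∈ L and all ε > 0 there exist k₁, k₂, k₃ ∈ L with k̂ = 2k̂₁ + k̂₂ − k̂₃ and k̂₂, k̂₃ ≥ −ε·1 in Aff S(G,u). Then G/L with the quotient ordering is unperforated. -/
/-!
States detect strict positivity: if every normalized trace is positive at `x`, then some
`m • u ≤ n • x` with `m, n > 0`, so `x ≥ 0` by unperforation. The states are produced by a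
Hahn–Banach argument over `ℤ`, dominated by the gauge `x ↦ inf {m / n | n • x ≤ m • u}`.
Given a positive lift `b` of `2g` modulo `L`, the approximate halving (*) yields
`h = g - k₁ + k₃ ≡ g` with `2ĥ = b̂ + k̂₂ + k̂₃`, which is strictly positive since `b` is an order
unit; so `2a ≥ 0` implies `a ≥ 0` in `G/L`. If `na ≥ 0` with a nonzero positive lift, simplicity
gives `ma ≥ 0` for all large `m`, in particular for a power of `2`, and halving repeatedly ends
the proof.
-/

namespace Paper

def RieszDecomp (G : Type*) [AddCommGroup G] [PartialOrder G] [IsOrderedAddMonoid G] : Prop :=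
  ∀ a b c : G, 0 ≤ a → 0 ≤ b → 0 ≤ c → a ≤ b + c →
    ∃ b' c' : G, 0 ≤ b' ∧ b' ≤ b ∧ 0 ≤ c' ∧ c' ≤ c ∧ a = b' + c'

def Unperf (G : Type*) [AddCommGroup G] [PartialOrder G] [IsOrderedAddMonoid G] : Prop :=
  ∀ (n : ℕ) (g : G), 0 < n → 0 ≤ n • g → 0 ≤ g

def DirectedGrp (G : Type*) [AddCommGroup G] [PartialOrder G] [IsOrderedAddMonoid G] : Prop :=
  ∀ a b : G, ∃ c : G, a ≤ c ∧ b ≤ c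

/-- A dimension group: a directed, unperforated partially ordered abelian group
satisfying the Riesz decomposition property. -/
def DimGroup (G : Type*) [AddCommGroup G] [PartialOrder G] [IsOrderedAddMonoid G] : Prop :=
  DirectedGrp G ∧ RieszDecomp G ∧ Unperf G

/-- A trace: a nonzero positive group homomorphism to `ℝ`. -/
def IsTrace {G : Type*} [AddCommGroup G] [PartialOrder G] [IsOrderedAddMonoid G] (τ : G →+ ℝ) : Prop :=
  (∀ g : G, 0 ≤ g → 0 ≤ τ g) ∧ τ ≠ 0

def IsOrderUnit {G : Type*} [AddCommGroup G] [PartialOrder G] [IsOrderedAddMonoid G] (u : G) : Prop :=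
  0 ≤ u ∧ ∀ g : G, ∃ N : ℕ, -(N • u) ≤ g ∧ g ≤ N • u

/-- A good trace: for all nonzero positive `a`, `b` with `τ a < τ b` there is
`c ∈ [0, b]` with `τ c = τ a`. -/
def GoodTrace {G : Type*} [AddCommGroup G] [PartialOrder G] [IsOrderedAddMonoid G] (τ : G →+ ℝ) : Prop :=
  ∀ a b : G, 0 ≤ a → 0 ≤ b → a ≠ 0 → b ≠ 0 → τ a < τ b →
    ∃ c : G, 0 ≤ c ∧ c ≤ b ∧ τ c = τ a


/-- The normalized trace (state) space of `(G, u)`, realized as a set of real-valued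
functions on `G` (with the topology of pointwise convergence on `G → ℝ`). -/
def StateSet (G : Type*) [AddCommGroup G] [PartialOrder G] [IsOrderedAddMonoid G] (u : G) : Set (G → ℝ) :=
  {f | (∀ a b : G, f (a + b) = f a + f b) ∧ (∀ g : G, 0 ≤ g → 0 ≤ f g) ∧ f u = 1}

/-- `(G,u)` is approximately divisible: the image of `G` under the affine
representation is norm dense in `Aff S(G,u)`, i.e. every continuous affine
real-valued function on the state space is uniformly approximable by elements `ĝ`. -/
def ApproxDivisible (G : Type*) [AddCommGroup G] [PartialOrder G] [IsOrderedAddMonoid G] (u : G) : Prop :=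
  ∀ f : (G → ℝ) → ℝ, ContinuousOn f (StateSet G u) →
    (∀ σ₁ ∈ StateSet G u, ∀ σ₂ ∈ StateSet G u, ∀ t : ℝ, 0 ≤ t → t ≤ 1 →
      f (fun g => t * σ₁ g + (1 - t) * σ₂ g) = t * f σ₁ + (1 - t) * f σ₂) →
    ∀ ε : ℝ, 0 < ε → ∃ g : G, ∀ σ ∈ StateSet G u, |f σ - σ g| < ε

/-- A pure (extreme) normalized trace of `(G,u)`. -/
def IsPureState (G : Type*) [AddCommGroup G] [PartialOrder G] [IsOrderedAddMonoid G] (u : G) (τ : G → ℝ) : Prop :=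
  τ ∈ StateSet G u ∧ ∀ σ₁ ∈ StateSet G u, ∀ σ₂ ∈ StateSet G u, ∀ t : ℝ, 0 < t → t < 1 →
    (τ = fun g => t * σ₁ g + (1 - t) * σ₂ g) → σ₁ = τ ∧ σ₂ = τ

section Sublinear

variable {G : Type*} [AddCommGroup G]

structure IsNatSublinear (p : G → ℝ) : Prop where
  add_le : ∀ x y, p (x + y) ≤ p x + p y
  nsmul : ∀ (n : ℕ) x, p (n • x) = n * p x

namespace IsNatSublinear

variable {p : G → ℝ}

lemma map_zero (hp : IsNatSublinear p) : p 0 = 0 := by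
  simpa using hp.nsmul 0 0

lemma neg_neg_le (hp : IsNatSublinear p) (x : G) : -p (-x) ≤ p x := by
  have := hp.add_le x (-x)
  rw [add_neg_cancel, hp.map_zero] at this
  linarith

lemma zsmul_neg_neg_le (hp : IsNatSublinear p) (x : G) (c : ℤ) : c * -p (-x) ≤ p (c • x) := by
  obtain ⟨n, rfl | rfl⟩ := Int.eq_nat_or_neg c
  · have := hp.neg_neg_le (n • x)
    rw [← smul_neg, hp.nsmul] at this
    simpa [natCast_zsmul] using this
  · rw [neg_zsmul, natCast_zsmul, ← smul_neg, hp.nsmul]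
    push_cast
    linarith

lemma exists_extension_value (hp : IsNatSublinear p) (f : G →ₗ.[ℤ] ℝ)
    (hf : ∀ x : f.domain, f x ≤ p x) (y : G) :
    ∃ r : ℝ, ∀ (d : f.domain) (c : ℤ), f d + c * r ≤ p (d + c • y) := by
  set A := {a | ∃ (d : f.domain) (n : ℕ), 0 < n ∧ a = (f d - p (d - n • y)) / n}
  set B := {b | ∃ (d : f.domain) (n : ℕ), 0 < n ∧ b = (p (d + n • y) - f d) / n}
  -- `G` cannot be divided by `n`, so the bounds on `r` are compared after multiplying through.
  have hAB : ∀ a ∈ A, ∀ b ∈ B, a ≤ b := by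
    rintro _ ⟨d, m, hm, rfl⟩ _ ⟨d', n, hn, rfl⟩
    rw [div_le_div_iff₀ (by exact_mod_cast hm) (by exact_mod_cast hn)]
    have hsum : (n • (d - m • y) + m • (d' + n • y) : G) = ((n • d + m • d' : f.domain) : G) := by
      simp only [smul_sub, smul_add, Submodule.coe_add, smul_comm n m y]
      abel
    have hf_add : f (n • d + m • d') = n * f d + m * f d' := by
      simp only [LinearPMap.map_add, ← natCast_zsmul, LinearPMap.map_smul, zsmul_eq_mul,
        Int.cast_natCast]
    have := calc n * f d + m * f d' = f (n • d + m • d') := hf_add.symm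
      _ ≤ p (n • (d - m • y) + m • (d' + n • y)) := hsum ▸ hf _
      _ ≤ n * p (d - m • y) + m * p (d' + n • y) := by
        rw [← hp.nsmul, ← hp.nsmul]
        exact hp.add_le _ _
    linarith
  obtain ⟨r, hrA, hrB⟩ := exists_between_of_forall_le
    (⟨_, 0, 1, one_pos, rfl⟩ : A.Nonempty) (⟨_, 0, 1, one_pos, rfl⟩ : B.Nonempty) hAB
  refine ⟨r, fun d c => ?_⟩
  obtain ⟨n, rfl | rfl⟩ := Int.eq_nat_or_neg c
  · rcases n.eq_zero_or_pos with rfl | hn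
    · simpa using hf d
    · have := hrB ⟨d, n, hn, rfl⟩
      rw [le_div_iff₀ (by exact_mod_cast hn)] at this
      rw [natCast_zsmul]
      push_cast
      linarith
  · rcases n.eq_zero_or_pos with rfl | hn
    · simpa using hf d
    · have := hrA ⟨d, n, hn, rfl⟩
      rw [div_le_iff₀ (by exact_mod_cast hn)] at this
      rw [neg_zsmul, natCast_zsmul, ← sub_eq_add_neg]
      push_cast
      linarith

lemma exists_extension_of_value (hp : IsNatSublinear p) (f : G →ₗ.[ℤ] ℝ)
    (y : G) (r : ℝ)
    (hr : ∀ (d : f.domain) (c : ℤ), f d + c * r ≤ p (d + c • y)) :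
    ∃ g : G →ₗ.[ℤ] ℝ, f ≤ g ∧ (∃ hy : y ∈ g.domain, g ⟨y, hy⟩ = r) ∧
      ∀ x : g.domain, g x ≤ p x := by
  have hzero : ∀ (d : f.domain) (c : ℤ), (d : G) + c • y = 0 → f d + c * r = 0 := by
    intro d c h
    have h₁ := hr d c
    have h₂ := hr (-d) (-c)
    rw [Submodule.coe_neg, neg_zsmul, ← neg_add, h, neg_zero, LinearPMap.map_neg] at h₂
    rw [h] at h₁
    push_cast at h₂
    linarith [hp.map_zero]
  let g₀ : G →ₗ.[ℤ] ℝ := LinearPMap.mkSpanSingleton' y r fun c hc => by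
    simpa [zsmul_eq_mul] using hzero 0 c (by simpa using hc)
  have g₀_apply : ∀ (c : ℤ) (h : c • y ∈ g₀.domain), g₀ ⟨c • y, h⟩ = c * r := fun c h =>
    (LinearPMap.mkSpanSingleton'_apply _ _ _ c h).trans (zsmul_eq_mul _ _)
  have compat : ∀ (z : f.domain) (w : g₀.domain), (z : G) = w → f z = g₀ w := by
    rintro z ⟨w, hw⟩ hzw
    obtain ⟨c, rfl⟩ := Submodule.mem_span_singleton.1 hw
    have hzw' : (z : G) = c • y := hzw
    have := hzero (-z) c (by rw [Submodule.coe_neg, hzw', neg_add_cancel])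
    rw [g₀_apply]
    rw [LinearPMap.map_neg] at this
    linarith
  have hy : y ∈ g₀.domain := Submodule.mem_span_singleton_self y
  refine ⟨f.sup g₀ compat, f.left_le_sup g₀ compat, ⟨Submodule.mem_sup_right hy, ?_⟩, ?_⟩
  · calc f.sup g₀ compat ⟨y, _⟩ = f 0 + g₀ ⟨y, hy⟩ :=
          LinearPMap.sup_apply compat 0 ⟨y, hy⟩ _ (zero_add y)
      _ = r := by
        rw [LinearPMap.map_zero, zero_add]
        exact LinearPMap.mkSpanSingleton'_apply_self _ _ _ _
  · rintro ⟨x, hx⟩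
    obtain ⟨z, hz, w, hw, rfl⟩ := Submodule.mem_sup.1 hx
    obtain ⟨c, rfl⟩ := Submodule.mem_span_singleton.1 hw
    calc f.sup g₀ compat ⟨z + c • y, hx⟩ = f ⟨z, hz⟩ + g₀ ⟨c • y, hw⟩ :=
          LinearPMap.sup_apply compat _ _ _ rfl
      _ ≤ p (z + c • y) := by simpa [g₀_apply] using hr ⟨z, hz⟩ c

theorem exists_addMonoidHom_extension (hp : IsNatSublinear p) (f : G →ₗ.[ℤ] ℝ)
    (hf : ∀ x : f.domain, f x ≤ p x) :
    ∃ g : G →+ ℝ, (∀ x : f.domain, g x = f x) ∧ ∀ x, g x ≤ p x := by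
  set S := {g : G →ₗ.[ℤ] ℝ | ∀ x : g.domain, g x ≤ p x}
  have hchain : ∀ c ⊆ S, IsChain (· ≤ ·) c → ∀ g ∈ c, ∃ ub ∈ S, ∀ h ∈ c, h ≤ ub := by
    intro c hcS hc g hg
    have hdir : DirectedOn (· ≤ ·) c := hc.directedOn
    refine ⟨LinearPMap.sSup c hdir, fun ⟨x, hx⟩ => ?_, fun h => LinearPMap.le_sSup hdir⟩
    have hdom : DirectedOn (· ≤ ·) (LinearPMap.domain '' c) :=
      directedOn_image.2 (hdir.mono LinearPMap.domain_mono.monotone)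
    obtain ⟨_, ⟨h, hhc, rfl⟩, hxh⟩ :=
      (Submodule.mem_sSup_of_directed (Set.Nonempty.image _ ⟨g, hg⟩) hdom).1 hx
    rw [← (LinearPMap.le_sSup hdir hhc).2 (x := ⟨x, hxh⟩) rfl]
    exact hcS hhc ⟨x, hxh⟩
  obtain ⟨m, hfm, hm⟩ := zorn_le_nonempty₀ S hchain f hf
  have hdom : ∀ x, x ∈ m.domain := fun x => by
    obtain ⟨r, hr⟩ := hp.exists_extension_value m hm.prop x
    obtain ⟨g, hmg, ⟨hx, -⟩, hg⟩ := hp.exists_extension_of_value m x r hr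
    exact (hm.le_of_ge hg hmg).1 hx
  exact ⟨(m.toFun.comp (LinearMap.id.codRestrict m.domain hdom)).toAddMonoidHom,
    fun x => (hfm.2 rfl).symm, fun x => hm.prop _⟩

theorem exists_addMonoidHom_le_eq_neg_neg (hp : IsNatSublinear p) (x : G) :
    ∃ σ : G →+ ℝ, (∀ y, σ y ≤ p y) ∧ σ x = -p (-x) := by
  obtain ⟨g, -, ⟨hx, hgx⟩, hg⟩ := hp.exists_extension_of_value ⊥ x (-p (-x)) fun d c => by
    rw [show (d : G) = 0 from d.2, zero_add]
    exact (zero_add _).trans_le (hp.zsmul_neg_neg_le x c)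
  obtain ⟨σ, hσg, hσ⟩ := hp.exists_addMonoidHom_extension g hg
  exact ⟨σ, hσ, (hσg ⟨x, hx⟩).trans hgx⟩

end IsNatSublinear

end Sublinear

section OrderUnit

variable {G : Type*} [AddCommGroup G] [PartialOrder G] [IsOrderedAddMonoid G]

lemma Unperf.int_le_of_zsmul_le (hU : Unperf G) {u : G} (hu : 0 ≤ u) (hu0 : u ≠ 0) {a b : ℤ}
    (h : a • u ≤ b • u) : a ≤ b := by
  by_contra! hba
  obtain ⟨n, hn⟩ : ∃ n : ℕ, a - b = n + 1 := ⟨(a - b - 1).toNat, by omega⟩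
  have hnu : 0 ≤ (n + 1) • -u := by
    rw [smul_neg, neg_nonneg, ← natCast_zsmul]
    push_cast
    rw [← hn, sub_zsmul, ← sub_eq_add_neg]
    exact sub_nonpos.2 h
  exact hu0 (le_antisymm (neg_nonneg.1 (hU _ _ n.succ_pos hnu)) hu)

def orderUnitRatios (u x : G) : Set ℝ :=
  {q | ∃ (m : ℤ) (n : ℕ), 0 < n ∧ n • x ≤ m • u ∧ q = m / n}

/-- Goodearl's `f^*(x)`, the largest value a state on `(G, u)` can take at `x`. For `u = 0` the
ratios are unbounded below and `sInf` returns the junk value `0`. -/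
noncomputable def orderUnitGauge (u x : G) : ℝ :=
  sInf (orderUnitRatios u x)

variable {u : G}

lemma IsOrderUnit.orderUnitRatios_nonempty (hu : IsOrderUnit u) (x : G) :
    (orderUnitRatios u x).Nonempty := by
  obtain ⟨N, -, hN⟩ := hu.2 x
  exact ⟨_, N, 1, one_pos, by simpa using hN, rfl⟩

lemma IsOrderUnit.bddBelow_orderUnitRatios (hU : Unperf G) (hu : IsOrderUnit u) (hu0 : u ≠ 0)
    (x : G) : BddBelow (orderUnitRatios u x) := by
  obtain ⟨N, hN, -⟩ := hu.2 x
  refine ⟨-N, ?_⟩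
  rintro _ ⟨m, n, hn, hnx, rfl⟩
  have : -((n * N : ℕ) : ℤ) ≤ m := by
    refine hU.int_le_of_zsmul_le hu.1 hu0 (le_trans ?_ hnx)
    rw [neg_zsmul, natCast_zsmul, mul_nsmul', ← smul_neg]
    exact nsmul_le_nsmul_right hN n
  have : -(n * N : ℝ) ≤ m := by exact_mod_cast this
  rw [le_div_iff₀ (by exact_mod_cast hn)]
  linarith

lemma IsOrderUnit.gauge_le (hU : Unperf G) (hu : IsOrderUnit u) (hu0 : u ≠ 0) {x : G} {m : ℤ}
    {n : ℕ} (hn : 0 < n) (h : n • x ≤ m • u) : orderUnitGauge u x ≤ m / n :=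
  csInf_le (hu.bddBelow_orderUnitRatios hU hu0 x) ⟨m, n, hn, h, rfl⟩

lemma IsOrderUnit.le_gauge (hu : IsOrderUnit u) {x : G} {c : ℝ}
    (h : ∀ (m : ℤ) (n : ℕ), 0 < n → n • x ≤ m • u → c ≤ m / n) : c ≤ orderUnitGauge u x :=
  le_csInf (hu.orderUnitRatios_nonempty x) fun _ ⟨m, n, hn, hmn, hq⟩ => hq ▸ h m n hn hmn

lemma IsOrderUnit.isNatSublinear_gauge (hU : Unperf G) (hu : IsOrderUnit u) (hu0 : u ≠ 0) :
    IsNatSublinear (orderUnitGauge u) where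
  add_le x y := by
    have key : ∀ (m m' : ℤ) (n n' : ℕ), 0 < n → 0 < n' → n • x ≤ m • u → n' • y ≤ m' • u →
        orderUnitGauge u (x + y) ≤ m / n + m' / n' := by
      intro m m' n n' hn hn' hx hy
      have hxy : (n * n') • (x + y) ≤ (m * n' + m' * n) • u :=
        calc (n * n') • (x + y) = n' • (n • x) + n • (n' • y) := by module
          _ ≤ n' • (m • u) + n • (m' • u) :=
            add_le_add (nsmul_le_nsmul_right hx n') (nsmul_le_nsmul_right hy n)
          _ = (m * n' + m' * n) • u := by module
      have := hu.gauge_le hU hu0 (by positivity) hxy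
      rw [show ((m * n' + m' * n : ℤ) : ℝ) / ((n * n' : ℕ) : ℝ) = m / n + m' / n' by
        field_simp; push_cast; ring] at this
      exact this
    have : ∀ (m' : ℤ) (n' : ℕ), 0 < n' → n' • y ≤ m' • u →
        orderUnitGauge u (x + y) - m' / n' ≤ orderUnitGauge u x := fun m' n' hn' hy =>
      hu.le_gauge fun m n hn hx => by linarith [key m m' n n' hn hn' hx hy]
    linarith [hu.le_gauge (c := orderUnitGauge u (x + y) - orderUnitGauge u x)
      fun m' n' hn' hy => by linarith [this m' n' hn' hy]]
  nsmul k x := by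
    rcases k.eq_zero_or_pos with rfl | hk
    · rw [zero_nsmul, Nat.cast_zero, zero_mul]
      refine le_antisymm ?_ (hu.le_gauge fun m n hn h => ?_)
      · simpa using hu.gauge_le hU hu0 (x := 0) (m := 0) one_pos (by simp)
      · have : (0 : ℤ) ≤ m := hU.int_le_of_zsmul_le hu.1 hu0 (by simpa using h)
        positivity
    have hk' : (0 : ℝ) < k := by exact_mod_cast hk
    refine le_antisymm ?_ (hu.le_gauge fun m n hn h => ?_)
    · have : orderUnitGauge u (k • x) / k ≤ orderUnitGauge u x := hu.le_gauge fun m n hn h => by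
        have hkx : n • (k • x) ≤ (k * m) • u :=
          calc n • (k • x) = k • (n • x) := smul_comm n k x
            _ ≤ k • (m • u) := nsmul_le_nsmul_right h k
            _ = (k * m) • u := by module
        have := hu.gauge_le hU hu0 hn hkx
        rw [div_le_iff₀ hk']
        push_cast at this
        linarith [show (k * m : ℝ) / n = m / n * k by ring]
      rw [div_le_iff₀ hk'] at this
      linarith
    · have := hu.gauge_le hU hu0 (Nat.mul_pos hn hk) (by rwa [mul_nsmul'])
      have hn' : (0 : ℝ) < n := by exact_mod_cast hn
      rw [le_div_iff₀ (by positivity)] at this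
      rw [le_div_iff₀ hn']
      push_cast at this
      linarith

end OrderUnit

section States

variable {G : Type*} [AddCommGroup G] [PartialOrder G] [IsOrderedAddMonoid G] {u : G}

lemma IsOrderUnit.mem_stateSet_of_le_gauge (hU : Unperf G) (hu : IsOrderUnit u) (hu0 : u ≠ 0)
    (σ : G →+ ℝ) (hσ : ∀ x, σ x ≤ orderUnitGauge u x) : ⇑σ ∈ StateSet G u := by
  have hgauge {x : G} {m : ℤ} (h : x ≤ m • u) : σ x ≤ m :=
    (hσ x).trans (by simpa using hu.gauge_le hU hu0 one_pos (by simpa using h))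
  refine ⟨map_add σ, fun g hg => ?_, le_antisymm (by simpa using hgauge (m := 1) (by simp)) ?_⟩
  · simpa using hgauge (x := -g) (m := 0) (by simpa using hg)
  · simpa using hgauge (x := -u) (m := -1) (by simp)

theorem nonneg_of_forall_stateSet_pos (hU : Unperf G) (hu : IsOrderUnit u) {x : G}
    (h : ∀ σ ∈ StateSet G u, 0 < σ x) : 0 ≤ x := by
  rcases eq_or_ne u 0 with rfl | hu0
  · obtain ⟨N, hN, -⟩ := hu.2 x
    simpa using hN
  obtain ⟨σ, hσ, hσx⟩ := (hu.isNatSublinear_gauge hU hu0).exists_addMonoidHom_le_eq_neg_neg x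
  have hneg : orderUnitGauge u (-x) < 0 := by
    linarith [h σ (hu.mem_stateSet_of_le_gauge hU hu0 σ hσ)]
  obtain ⟨_, ⟨m, n, hn, hmn, rfl⟩, hlt⟩ :=
    exists_lt_of_csInf_lt (hu.orderUnitRatios_nonempty _) hneg
  have hm : m < 0 := by
    by_contra! hm
    exact hlt.not_ge (by positivity)
  refine hU n x hn ((zsmul_nonneg hu.1 (neg_nonneg.2 hm.le)).trans ?_)
  rwa [neg_zsmul, neg_le, ← smul_neg]

lemma StateSet.map_sub {σ : G → ℝ} (hσ : σ ∈ StateSet G u) (a b : G) :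
    σ (a - b) = σ a - σ b :=
  _root_.map_sub (AddMonoidHom.mk' σ hσ.1) a b

lemma StateSet.map_nsmul {σ : G → ℝ} (hσ : σ ∈ StateSet G u) (n : ℕ) (a : G) :
    σ (n • a) = n * σ a :=
  (_root_.map_nsmul (AddMonoidHom.mk' σ hσ.1) n a).trans (nsmul_eq_mul _ _)

lemma IsOrderUnit.exists_pos_le_stateSet {b : G} (hb : IsOrderUnit b) :
    ∃ δ > 0, ∀ σ ∈ StateSet G u, δ ≤ σ b := by
  obtain ⟨N, -, hN⟩ := hb.2 u
  refine ⟨1 / (N + 1), by positivity, fun σ hσ => ?_⟩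
  have hNb := hσ.2.1 _ (sub_nonneg.2 hN)
  rw [StateSet.map_sub hσ, StateSet.map_nsmul hσ, hσ.2.2] at hNb
  rw [div_le_iff₀ (by positivity)]
  linarith [hσ.2.1 b hb.1]

end States

section Quotient

variable {G : Type*} [AddCommGroup G] [PartialOrder G] {L : AddSubgroup G}

/-- `x + L ≥ 0` in the quotient ordering on `G ⧸ L`. -/
def NonnegMod (L : AddSubgroup G) (x : G) : Prop :=
  ∃ a, 0 ≤ a ∧ x - a ∈ L

lemma NonnegMod.of_mem {x : G} (hx : x ∈ L) : NonnegMod L x :=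
  ⟨0, le_rfl, by rwa [sub_zero]⟩

/-- `h = g - k₁ + k₃` satisfies `2ĥ = b̂ + k̂₂ + k̂₃`, which is strictly positive
once `ε` is small compared with the order unit `b`. -/
lemma nonnegMod_of_two_nsmul_sub_mem [IsOrderedAddMonoid G] {u : G} (hU : Unperf G)
    (hu : IsOrderUnit u)
    (hstar : ∀ k ∈ L, ∀ ε : ℝ, 0 < ε → ∃ k₁ ∈ L, ∃ k₂ ∈ L, ∃ k₃ ∈ L,
      (∀ σ ∈ StateSet G u, σ k = 2 * σ k₁ + σ k₂ - σ k₃) ∧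
      (∀ σ ∈ StateSet G u, -ε ≤ σ k₂ ∧ -ε ≤ σ k₃))
    {b g : G} (hb : IsOrderUnit b) (hg : 2 • g - b ∈ L) : NonnegMod L g := by
  obtain ⟨δ, hδ, hδb⟩ := hb.exists_pos_le_stateSet (u := u)
  obtain ⟨k₁, hk₁, k₂, -, k₃, hk₃, hk, hbound⟩ := hstar _ hg (δ / 4) (by positivity)
  refine ⟨g - k₁ + k₃, nonneg_of_forall_stateSet_pos hU hu fun σ hσ => ?_, ?_⟩
  · have := hk σ hσ
    rw [StateSet.map_sub hσ, StateSet.map_nsmul hσ, Nat.cast_ofNat] at this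
    rw [hσ.1, StateSet.map_sub hσ]
    linarith [hδb σ hσ, hbound σ hσ]
  · rw [show g - (g - k₁ + k₃) = k₁ - k₃ by abel]
    exact sub_mem hk₁ hk₃

lemma NonnegMod.exists_forall_ge_nsmul [IsOrderedAddMonoid G] {a g : G} (ha : IsOrderUnit a)
    {n : ℕ} (hn : 0 < n) (hg : n • g - a ∈ L) : ∃ M : ℕ, ∀ m ≥ M, NonnegMod L (m • g) := by
  -- With `m = q n + r` and `q ≥ r N`: `m g ≡ q a + r g = (q - r N) a + r (N a + g) ≥ 0`.
  obtain ⟨N, hN, -⟩ := ha.2 g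
  refine ⟨n * (n * N), fun m hm => ⟨(m / n) • a + (m % n) • g, ?_, ?_⟩⟩
  · have hq : m % n * N ≤ m / n :=
      calc m % n * N ≤ n * N := Nat.mul_le_mul_right N (Nat.mod_lt m hn).le
        _ ≤ m / n := (Nat.le_div_iff_mul_le hn).2 (by linarith)
    rw [← Nat.sub_add_cancel hq, add_nsmul, mul_nsmul', add_assoc, ← nsmul_add]
    exact add_nonneg (nsmul_nonneg ha.1 _) (nsmul_nonneg (neg_le_iff_add_nonneg'.1 hN) _)
  · have : m • g - ((m / n) • a + (m % n) • g) = (m / n) • (n • g - a) := by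
      calc m • g - ((m / n) • a + (m % n) • g)
          = (n * (m / n) + m % n) • g - ((m / n) • a + (m % n) • g) := by rw [Nat.div_add_mod]
        _ = (m / n) • (n • g - a) := by module
    rw [this]
    exact nsmul_mem hg _

end Quotient

theorem quotient_unperforated_of_approx_halving_general {G : Type*} [AddCommGroup G] [PartialOrder G] [IsOrderedAddMonoid G]
    (hG : DimGroup G)
    (hsimple : ∀ g : G, 0 ≤ g → g ≠ 0 → IsOrderUnit g)
    (u : G) (hu : IsOrderUnit u)
    (L : AddSubgroup G)
    -- G/L is torsion free
    (htf : ∀ (g : G) (n : ℕ), 0 < n → n • g ∈ L → g ∈ L)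
    -- (*): k̂ = 2k̂₁ + k̂₂ - k̂₃ with k̂₂, k̂₃ ≥ -ε·1 in Aff S(G,u)
    (hstar : ∀ k ∈ L, ∀ ε : ℝ, 0 < ε → ∃ k₁ ∈ L, ∃ k₂ ∈ L, ∃ k₃ ∈ L,
      (∀ σ ∈ StateSet G u, σ k = 2 * σ k₁ + σ k₂ - σ k₃) ∧
      (∀ σ ∈ StateSet G u, -ε ≤ σ k₂ ∧ -ε ≤ σ k₃)) :
    -- G/L with the quotient ordering is unperforated
    ∀ (g : G) (n : ℕ), 0 < n → (∃ a : G, 0 ≤ a ∧ n • g - a ∈ L) →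
      ∃ a : G, 0 ≤ a ∧ g - a ∈ L := by
  have halve : ∀ x, NonnegMod L (2 • x) → NonnegMod L x := by
    rintro x ⟨b, hb, hbL⟩
    rcases eq_or_ne b 0 with rfl | hb0
    · exact NonnegMod.of_mem (htf x 2 two_pos (by simpa using hbL))
    · exact nonnegMod_of_two_nsmul_sub_mem hG.2.2 hu hstar (hsimple b hb hb0) hbL
  have halve_pow : ∀ j x, NonnegMod L (2 ^ j • x) → NonnegMod L x := by
    intro j
    induction j with
    | zero => simp
    | succ j ih => exact fun x hx => halve x (ih _ (by rwa [← mul_nsmul', ← pow_succ]))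
  rintro g n hn ⟨a, ha, haL⟩
  rcases eq_or_ne a 0 with rfl | ha0
  · exact NonnegMod.of_mem (htf g n hn (by simpa using haL))
  obtain ⟨M, hM⟩ := NonnegMod.exists_forall_ge_nsmul (hsimple a ha ha0) hn haL
  exact halve_pow M g (hM _ Nat.lt_two_pow_self.le)

theorem quotient_unperforated_of_approx_halving {G : Type*} [AddCommGroup G] [PartialOrder G] [IsOrderedAddMonoid G]
    (hG : DimGroup G)
    (hsimple : ∀ g : G, 0 ≤ g → g ≠ 0 → IsOrderUnit g)
    (u : G) (hu : IsOrderUnit u)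
    (L : AddSubgroup G)
    -- L ∩ G⁺ = {0}
    (hLpos : ∀ g ∈ L, 0 ≤ g → g = 0)
    -- G/L is torsion free
    (htf : ∀ (g : G) (n : ℕ), 0 < n → n • g ∈ L → g ∈ L)
    -- (*): k̂ = 2k̂₁ + k̂₂ - k̂₃ with k̂₂, k̂₃ ≥ -ε·1 in Aff S(G,u)
    (hstar : ∀ k ∈ L, ∀ ε : ℝ, 0 < ε → ∃ k₁ ∈ L, ∃ k₂ ∈ L, ∃ k₃ ∈ L,
      (∀ σ ∈ StateSet G u, σ k = 2 * σ k₁ + σ k₂ - σ k₃) ∧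
      (∀ σ ∈ StateSet G u, -ε ≤ σ k₂ ∧ -ε ≤ σ k₃)) :
    -- G/L with the quotient ordering is unperforated
    ∀ (g : G) (n : ℕ), 0 < n → (∃ a : G, 0 ≤ a ∧ n • g - a ∈ L) →
      ∃ a : G, 0 ≤ a ∧ g - a ∈ L :=
  quotient_unperforated_of_approx_halving_general hG hsimple u hu L htf hstar

end Paper
end
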